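/- arXiv:2508.16567 — 8 statements merged into one kernel-verified Lean document; each statement's English description precedes it below -/
import Mathlib

section
/- Let v, b : ℝ × ℝ → ℝ, let P : ℝ × ℝ × ℝ → ℝ be differentiable and satisfy the continuum covariance equation ∂_t P + v(x₁,t) ∂_{x₁} P + v(x₂,t) ∂_{x₂} P + (b(x₁,t) + b(x₂,t)) P = 0, and let σ : ℝ × ℝ → ℝ be differentiable with σ(x,t) > 0 for all (x,t) and satisfying ∂_t σ + v(x,t) ∂_x σ + b(x,t) σ = 0. Then the correlation C(x₁,x₂,t) := P(x₁,x₂,t) / (σ(x₁,t) σ(x₂,t)) satisfies the correlation equation ∂_t C + v(x₁,t) ∂_{x₁} C + v(x₂,t) ∂_{x₂} C = 0 for all (x₁,x₂,t). -/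
/-!
The transport operator `L = ∂_t + v(x₁,t) ∂_{x₁} + v(x₂,t) ∂_{x₂}` is a derivation, and the
equation for `σ` says `L(σ(x₁,t) σ(x₂,t)) = -(b(x₁,t) + b(x₂,t)) σ(x₁,t) σ(x₂,t)`.
Writing `P = σ(x₁,t) σ(x₂,t) C`, the Leibniz rule turns the covariance equation into
`σ(x₁,t) σ(x₂,t) · L C = 0`, and `σ > 0` lets us cancel the product.
-/

theorem mul_deriv_div {𝕜 : Type*} [NontriviallyNormedField 𝕜] {f g : 𝕜 → 𝕜} {x : 𝕜}
    (hf : DifferentiableAt 𝕜 f x) (hg : DifferentiableAt 𝕜 g x) (hx : g x ≠ 0) :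
    g x * deriv (fun y => f y / g y) x = deriv f x - f x / g x * deriv g x := by
  rw [deriv_fun_div hf hg hx]
  field_simp

/-- If `P` satisfies the continuum covariance equation and the positive
standard-deviation field `σ` satisfies `∂_t σ + v ∂_x σ + b σ = 0`, then the
correlation `C(x₁,x₂,t) := P(x₁,x₂,t)/(σ(x₁,t) σ(x₂,t))` satisfies the
correlation equation `∂_t C + v(x₁,t) ∂_{x₁} C + v(x₂,t) ∂_{x₂} C = 0`. -/
theorem correlation_equation_of_covariance_equation
    (v b : ℝ × ℝ → ℝ) (P : ℝ × ℝ × ℝ → ℝ) (σ : ℝ × ℝ → ℝ)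
    (hP : Differentiable ℝ P)
    (hppde : ∀ x₁ x₂ t,
      deriv (fun τ => P (x₁, x₂, τ)) t
        + v (x₁, t) * deriv (fun y => P (y, x₂, t)) x₁
        + v (x₂, t) * deriv (fun y => P (x₁, y, t)) x₂
        + (b (x₁, t) + b (x₂, t)) * P (x₁, x₂, t) = 0)
    (hσ : Differentiable ℝ σ)
    (hσpos : ∀ x t, 0 < σ (x, t))
    (hσpde : ∀ x t,
      deriv (fun τ => σ (x, τ)) t + v (x, t) * deriv (fun y => σ (y, t)) x
        + b (x, t) * σ (x, t) = 0) :
    ∀ x₁ x₂ t,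
      deriv (fun τ => P (x₁, x₂, τ) / (σ (x₁, τ) * σ (x₂, τ))) t
        + v (x₁, t) * deriv (fun y => P (y, x₂, t) / (σ (y, t) * σ (x₂, t))) x₁
        + v (x₂, t) * deriv (fun y => P (x₁, y, t) / (σ (x₁, t) * σ (y, t))) x₂ = 0 := by
  intro x₁ x₂ t
  have hs : σ (x₁, t) * σ (x₂, t) ≠ 0 := (mul_pos (hσpos x₁ t) (hσpos x₂ t)).ne'
  have hCt := mul_deriv_div (f := fun τ => P (x₁, x₂, τ)) (g := fun τ => σ (x₁, τ) * σ (x₂, τ))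
    (by fun_prop) (by fun_prop) hs
  have hCx₁ := mul_deriv_div (f := fun y => P (y, x₂, t)) (g := fun y => σ (y, t) * σ (x₂, t))
    (by fun_prop) (by fun_prop) hs
  have hCx₂ := mul_deriv_div (f := fun y => P (x₁, y, t)) (g := fun y => σ (x₁, t) * σ (y, t))
    (by fun_prop) (by fun_prop) hs
  rw [deriv_fun_mul (by fun_prop) (by fun_prop)] at hCt
  rw [deriv_mul_const (by fun_prop)] at hCx₁
  rw [deriv_const_mul _ (by fun_prop)] at hCx₂
  set C := P (x₁, x₂, t) / (σ (x₁, t) * σ (x₂, t))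
  have hPC : C * (σ (x₁, t) * σ (x₂, t)) = P (x₁, x₂, t) := div_mul_cancel₀ _ hs
  refine (mul_eq_zero.mp ?_).resolve_left hs
  linear_combination hCt + v (x₁, t) * hCx₁ + v (x₂, t) * hCx₂ + hppde x₁ x₂ t
    - C * σ (x₂, t) * hσpde x₁ t - C * σ (x₁, t) * hσpde x₂ t
    + (b (x₁, t) + b (x₂, t)) * hPC
end

section
/- Let v : ℝ × ℝ → ℝ be twice continuously differentiable in x, and let C : ℝ × ℝ × ℝ → ℝ be three times continuously differentiable, satisfy C(x,x,t) = 1 for all x and t, and satisfy the correlation equation ∂_t C + v(x₁,t) ∂_{x₁} C + v(x₂,t) ∂_{x₂} C = 0. Define C₂(x,t) := [∂²_{x₁} C − 2 ∂_{x₁}∂_{x₂} C + ∂²_{x₂} C](x₁,x₂,t) evaluated at x₁ = x₂ = x. Then C₂ satisfies the transport equation ∂_t C₂ + v(x,t) ∂_x C₂ + 2 v_x(x,t) C₂ = 0 for all (x,t). -/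
/-!
Differentiating `C(x,x,t) = 1` twice along the diagonal gives `(∂₁ + ∂₂)² C = 0` there, so
`C₂ = (∂₁ - ∂₂)² C = -4 ∂₁∂₂C` on the diagonal. Each `∂ᵢ` commutes with the operator
`L = ∂_t + v(x₁,t) ∂₁ + v(x₂,t) ∂₂` up to the term `v_x(xᵢ,t) ∂ᵢ`, so applying `∂₁∂₂` to `L C = 0`
shows that `M = ∂₁∂₂C` satisfies `L M + (v_x(x₁,t) + v_x(x₂,t)) M = 0`. On the diagonal,
`∂₁ M + ∂₂ M` is the `x`-derivative of `M(x,x,t)`, which turns this into the transport equation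
for `M`, hence for `C₂ = -4 M`.
-/

/-- The diagonal second-difference quantity
`C₂(x,t) = [∂²_{x₁} C − 2 ∂_{x₁}∂_{x₂} C + ∂²_{x₂} C](x₁,x₂,t)` at `x₁ = x₂ = x`. -/
noncomputable def C2diag (C : ℝ × ℝ × ℝ → ℝ) (x t : ℝ) : ℝ :=
  deriv (deriv (fun z => C (z, x, t))) x
    - 2 * deriv (fun y₁ => deriv (fun y₂ => C (y₁, y₂, t)) x) x
    + deriv (deriv (fun z => C (x, z, t))) x

section DirDeriv

variable {E F : Type*} [NormedAddCommGroup E] [NormedSpace ℝ E]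
  [NormedAddCommGroup F] [NormedSpace ℝ F] {f : E → F}

noncomputable def dirDeriv (u : E) (f : E → F) (p : E) : F :=
  fderiv ℝ f p u

theorem ContDiff.dirDeriv {m n : WithTop ℕ∞} (hf : ContDiff ℝ n f) (hmn : m + 1 ≤ n) (u : E) :
    ContDiff ℝ m (_root_.dirDeriv u f) :=
  (hf.fderiv_right hmn).clm_apply contDiff_const

theorem ContDiff.differentiable_dirDeriv {n : WithTop ℕ∞} (hf : ContDiff ℝ n f) (hn : 2 ≤ n)
    (u : E) : Differentiable ℝ (_root_.dirDeriv u f) :=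
  (hf.dirDeriv (m := 1) hn u).differentiable one_ne_zero

theorem dirDeriv_comm {n : WithTop ℕ∞} (hf : ContDiff ℝ n f) (hn : 2 ≤ n) (u w : E) :
    dirDeriv u (dirDeriv w f) = dirDeriv w (dirDeriv u f) := by
  have hfd : Differentiable ℝ (fderiv ℝ f) :=
    (hf.fderiv_right (m := 1) hn).differentiable one_ne_zero
  have hsnd : ∀ p (u w : E), dirDeriv u (dirDeriv w f) p = fderiv ℝ (fderiv ℝ f) p u w := by
    intro p u w
    change fderiv ℝ (fun q => fderiv ℝ f q w) p u = _
    simp [fderiv_clm_apply (hfd p) (differentiableAt_const w)]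
  funext p
  rw [hsnd, hsnd]
  exact (hf.contDiffAt.isSymmSndFDerivAt (by simpa using hn)) u w

end DirDeriv

theorem HasDerivAt.eq_zero_of_forall_eq {F : Type*} [NormedAddCommGroup F] [NormedSpace ℝ F]
    {g : ℝ → F} {g' k : F} {a : ℝ} (hg : HasDerivAt g g' a) (h : ∀ y, g y = k) : g' = 0 := by
  obtain rfl : g = fun _ => k := funext h
  exact hg.unique (hasDerivAt_const a k)

local notation "∂₁" => dirDeriv ((1, 0, 0) : ℝ × ℝ × ℝ)
local notation "∂₂" => dirDeriv ((0, 1, 0) : ℝ × ℝ × ℝ)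
local notation "∂₃" => dirDeriv ((0, 0, 1) : ℝ × ℝ × ℝ)

section Slices

variable {F : Type*} [NormedAddCommGroup F] [NormedSpace ℝ F] {f : ℝ × ℝ × ℝ → F} {a b c : ℝ}

theorem hasDerivAt_slice₁ (hf : DifferentiableAt ℝ f (a, b, c)) :
    HasDerivAt (fun y => f (y, b, c)) (∂₁ f (a, b, c)) a :=
  hf.hasFDerivAt.comp_hasDerivAt a
    ((hasDerivAt_id a).prodMk ((hasDerivAt_const a b).prodMk (hasDerivAt_const a c)))

theorem hasDerivAt_slice₂ (hf : DifferentiableAt ℝ f (a, b, c)) :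
    HasDerivAt (fun y => f (a, y, c)) (∂₂ f (a, b, c)) b :=
  hf.hasFDerivAt.comp_hasDerivAt b
    ((hasDerivAt_const b a).prodMk ((hasDerivAt_id b).prodMk (hasDerivAt_const b c)))

theorem hasDerivAt_slice₃ (hf : DifferentiableAt ℝ f (a, b, c)) :
    HasDerivAt (fun τ => f (a, b, τ)) (∂₃ f (a, b, c)) c :=
  hf.hasFDerivAt.comp_hasDerivAt c
    ((hasDerivAt_const c a).prodMk ((hasDerivAt_const c b).prodMk (hasDerivAt_id c)))

theorem hasDerivAt_diag (hf : DifferentiableAt ℝ f (a, a, c)) :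
    HasDerivAt (fun y => f (y, y, c)) (∂₁ f (a, a, c) + ∂₂ f (a, a, c)) a := by
  have h := hf.hasFDerivAt.comp_hasDerivAt a
    ((hasDerivAt_id a).prodMk ((hasDerivAt_id a).prodMk (hasDerivAt_const a c)))
  rwa [show ((1 : ℝ), (1 : ℝ), (0 : ℝ)) = (1, 0, 0) + (0, 1, 0) by norm_num, map_add] at h

end Slices

theorem C2diag_eq_dirDeriv {C : ℝ × ℝ × ℝ → ℝ} (hC : ContDiff ℝ 2 C) (x t : ℝ) :
    C2diag C x t = ∂₁ (∂₁ C) (x, x, t) - 2 * ∂₁ (∂₂ C) (x, x, t) + ∂₂ (∂₂ C) (x, x, t) := by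
  have hCd : Differentiable ℝ C := hC.differentiable two_ne_zero
  have e₁ : deriv (fun z => C (z, x, t)) = fun z => ∂₁ C (z, x, t) :=
    funext fun z => (hasDerivAt_slice₁ (hCd _)).deriv
  have e₂ : (fun y₁ => deriv (fun y₂ => C (y₁, y₂, t)) x) = fun y₁ => ∂₂ C (y₁, x, t) :=
    funext fun y₁ => (hasDerivAt_slice₂ (hCd _)).deriv
  have e₃ : deriv (fun z => C (x, z, t)) = fun z => ∂₂ C (x, z, t) :=
    funext fun z => (hasDerivAt_slice₂ (hCd _)).deriv
  rw [C2diag, e₁, e₂, e₃, (hasDerivAt_slice₁ (hC.differentiable_dirDeriv le_rfl _ _)).deriv,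
    (hasDerivAt_slice₁ (hC.differentiable_dirDeriv le_rfl _ _)).deriv,
    (hasDerivAt_slice₂ (hC.differentiable_dirDeriv le_rfl _ _)).deriv]

theorem C2diag_eq_neg_four_mul {C : ℝ × ℝ × ℝ → ℝ} (hC : ContDiff ℝ 2 C)
    (hdiag : ∀ x t, C (x, x, t) = 1) (x t : ℝ) :
    C2diag C x t = -4 * ∂₁ (∂₂ C) (x, x, t) := by
  have hCd : Differentiable ℝ C := hC.differentiable two_ne_zero
  have hD₁ : Differentiable ℝ (∂₁ C) := hC.differentiable_dirDeriv le_rfl _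
  have hD₂ : Differentiable ℝ (∂₂ C) := hC.differentiable_dirDeriv le_rfl _
  have h₁ : ∀ y, ∂₁ C (y, y, t) + ∂₂ C (y, y, t) = 0 := fun y =>
    (hasDerivAt_diag (hCd _)).eq_zero_of_forall_eq fun z => hdiag z t
  have h₂ : ∂₁ (∂₁ C) (x, x, t) + ∂₂ (∂₁ C) (x, x, t)
      + (∂₁ (∂₂ C) (x, x, t) + ∂₂ (∂₂ C) (x, x, t)) = 0 :=
    ((hasDerivAt_diag (hD₁ _)).add (hasDerivAt_diag (hD₂ _))).eq_zero_of_forall_eq h₁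
  rw [dirDeriv_comm hC le_rfl (0, 1, 0)] at h₂
  rw [C2diag_eq_dirDeriv hC]
  linear_combination h₂

noncomputable def correlationOp (v : ℝ × ℝ → ℝ) (f : ℝ × ℝ × ℝ → ℝ) (p : ℝ × ℝ × ℝ) : ℝ :=
  ∂₃ f p + v (p.1, p.2.2) * ∂₁ f p + v (p.2.1, p.2.2) * ∂₂ f p

theorem correlationOp_eq_deriv {v : ℝ × ℝ → ℝ} {f : ℝ × ℝ × ℝ → ℝ} (hf : Differentiable ℝ f)
    (a b c : ℝ) :
    correlationOp v f (a, b, c) = deriv (fun τ => f (a, b, τ)) c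
      + v (a, c) * deriv (fun y => f (y, b, c)) a + v (b, c) * deriv (fun y => f (a, y, c)) b := by
  rw [(hasDerivAt_slice₁ (hf _)).deriv, (hasDerivAt_slice₂ (hf _)).deriv,
    (hasDerivAt_slice₃ (hf _)).deriv, correlationOp]

section Commutators

variable {v : ℝ × ℝ → ℝ} {f : ℝ × ℝ × ℝ → ℝ} {a b c : ℝ}

theorem hasDerivAt_correlationOp_slice₁ (hv : DifferentiableAt ℝ (fun x => v (x, c)) a)
    (hf : ContDiff ℝ 2 f) :
    HasDerivAt (fun y => correlationOp v f (y, b, c))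
      (correlationOp v (∂₁ f) (a, b, c) + deriv (fun x => v (x, c)) a * ∂₁ f (a, b, c)) a := by
  have hD : ∀ u, DifferentiableAt ℝ (dirDeriv u f) (a, b, c) := fun u =>
    hf.differentiable_dirDeriv le_rfl u _
  refine (((hasDerivAt_slice₁ (hD (0, 0, 1))).add
    (hv.hasDerivAt.mul (hasDerivAt_slice₁ (hD (1, 0, 0))))).add
    ((hasDerivAt_slice₁ (hD (0, 1, 0))).const_mul (v (b, c)))).congr_deriv ?_
  rw [correlationOp, dirDeriv_comm hf le_rfl _ (0, 0, 1), dirDeriv_comm hf le_rfl _ (0, 1, 0)]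
  ring

theorem hasDerivAt_correlationOp_slice₂ (hv : DifferentiableAt ℝ (fun x => v (x, c)) b)
    (hf : ContDiff ℝ 2 f) :
    HasDerivAt (fun y => correlationOp v f (a, y, c))
      (correlationOp v (∂₂ f) (a, b, c) + deriv (fun x => v (x, c)) b * ∂₂ f (a, b, c)) b := by
  have hD : ∀ u, DifferentiableAt ℝ (dirDeriv u f) (a, b, c) := fun u =>
    hf.differentiable_dirDeriv le_rfl u _
  refine (((hasDerivAt_slice₂ (hD (0, 0, 1))).add
    ((hasDerivAt_slice₂ (hD (1, 0, 0))).const_mul (v (a, c)))).add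
    (hv.hasDerivAt.mul (hasDerivAt_slice₂ (hD (0, 1, 0))))).congr_deriv ?_
  rw [correlationOp, dirDeriv_comm hf le_rfl _ (0, 0, 1), dirDeriv_comm hf le_rfl _ (1, 0, 0)]
  ring

end Commutators

theorem correlationOp_mixedPartial {v : ℝ × ℝ → ℝ} {C : ℝ × ℝ × ℝ → ℝ}
    (hv : ∀ t, Differentiable ℝ (fun x => v (x, t))) (hC : ContDiff ℝ 3 C)
    (hL : ∀ p, correlationOp v C p = 0) (a b c : ℝ) :
    correlationOp v (∂₁ (∂₂ C)) (a, b, c)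
      + (deriv (fun x => v (x, c)) a + deriv (fun x => v (x, c)) b) * ∂₁ (∂₂ C) (a, b, c) = 0 := by
  have hD₂ : ContDiff ℝ 2 (∂₂ C) := hC.dirDeriv (by norm_num) _
  have h₂ : ∀ y, correlationOp v (∂₂ C) (y, b, c)
      + deriv (fun x => v (x, c)) b * ∂₂ C (y, b, c) = 0 := fun y =>
    (hasDerivAt_correlationOp_slice₂ (hv c _) (hC.of_le (by norm_num))).eq_zero_of_forall_eq
      fun z => hL _
  have h₁ := ((hasDerivAt_correlationOp_slice₁ (b := b) (hv c a) hD₂).add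
    ((hasDerivAt_slice₁ (hD₂.differentiable two_ne_zero (a, b, c))).const_mul
      (deriv (fun x => v (x, c)) b))).eq_zero_of_forall_eq h₂
  linear_combination h₁

/-- If `C` is a `C³` correlation function with unit diagonal satisfying the
correlation equation `∂_t C + v(x₁,t) ∂_{x₁} C + v(x₂,t) ∂_{x₂} C = 0`, then `C₂`
satisfies the transport equation `∂_t C₂ + v ∂_x C₂ + 2 v_x C₂ = 0`. -/
theorem C2_transport_equation
    (v : ℝ × ℝ → ℝ) (C : ℝ × ℝ × ℝ → ℝ)
    (hv : ∀ t, ContDiff ℝ 2 (fun x => v (x, t)))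
    (hC : ContDiff ℝ 3 C)
    (hdiag : ∀ x t, C (x, x, t) = 1)
    (hpde : ∀ x₁ x₂ t,
      deriv (fun τ => C (x₁, x₂, τ)) t
        + v (x₁, t) * deriv (fun y => C (y, x₂, t)) x₁
        + v (x₂, t) * deriv (fun y => C (x₁, y, t)) x₂ = 0) :
    ∀ x t,
      deriv (fun τ => C2diag C x τ) t
        + v (x, t) * deriv (fun y => C2diag C y t) x
        + 2 * deriv (fun y => v (y, t)) x * C2diag C x t = 0 := by
  intro x t
  have hC₂ : ContDiff ℝ 2 C := hC.of_le (by norm_num)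
  have hM : Differentiable ℝ (∂₁ (∂₂ C)) :=
    (hC.dirDeriv (m := 2) (by norm_num) _).differentiable_dirDeriv le_rfl _
  have hC2diag : ∀ y s, C2diag C y s = -4 * ∂₁ (∂₂ C) (y, y, s) :=
    C2diag_eq_neg_four_mul hC₂ hdiag
  have hL : ∀ p, correlationOp v C p = 0 := fun ⟨a, b, c⟩ => by
    rw [correlationOp_eq_deriv (hC₂.differentiable two_ne_zero)]
    exact hpde a b c
  have h_t : HasDerivAt (fun τ => C2diag C x τ) (-4 * ∂₃ (∂₁ (∂₂ C)) (x, x, t)) t := by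
    simpa only [hC2diag] using (hasDerivAt_slice₃ (hM _)).const_mul (-4)
  have h_x : HasDerivAt (fun y => C2diag C y t)
      (-4 * (∂₁ (∂₁ (∂₂ C)) (x, x, t) + ∂₂ (∂₁ (∂₂ C)) (x, x, t))) x := by
    simpa only [hC2diag] using (hasDerivAt_diag (hM _)).const_mul (-4)
  have h_mixed := correlationOp_mixedPartial (fun s => (hv s).differentiable two_ne_zero) hC hL x x t
  rw [correlationOp] at h_mixed
  rw [h_t.deriv, h_x.deriv, hC2diag]
  linear_combination -4 * h_mixed
end

section
/- Let v : ℝ × ℝ → ℝ be differentiable in x and let C₂ : ℝ × ℝ → ℝ be differentiable with C₂(x,t) < 0 for all (x,t) and satisfying the transport equation ∂_t C₂ + v(x,t) ∂_x C₂ + 2 v_x(x,t) C₂ = 0. Then the correlation length L(x,t) := (−C₂(x,t))^{−1/2} satisfies the correlation length equation ∂_t L + v(x,t) ∂_x L − v_x(x,t) L = 0 for all (x,t). -/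
/-! The transport equation for `C₂` is linear in `(C₂)_t, (C₂)_x`, and differentiating
`L = (−C₂)^{−1/2}` gives `L_s = L · (C₂)_s / (−2 C₂)` in either variable `s`; substituting,
`L_t + v L_x − v_x L = L / (−2 C₂) · ((C₂)_t + v (C₂)_x + 2 v_x C₂) = 0`. -/

theorem HasDerivAt.inv_sqrt_neg {f : ℝ → ℝ} {f' s : ℝ} (hf : HasDerivAt f f' s)
    (hneg : f s < 0) :
    HasDerivAt (fun s => (Real.sqrt (-f s))⁻¹)
      ((Real.sqrt (-f s))⁻¹ * (f' / (-2 * f s))) s := by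
  have hpos : 0 < -f s := neg_pos.mpr hneg
  have hsqrt_pos : 0 < Real.sqrt (-f s) := Real.sqrt_pos.mpr hpos
  have hsqrt := (Real.hasDerivAt_sqrt hpos.ne').comp s hf.neg
  refine (hsqrt.inv hsqrt_pos.ne').congr_deriv ?_
  simp only [Function.comp_apply, Pi.neg_apply]
  have hsq : Real.sqrt (-f s) ^ 2 = -f s := Real.sq_sqrt hpos.le
  have hf_ne : f s ≠ 0 := hneg.ne
  field_simp
  rw [hsq]
  ring

theorem correlation_length_equation_general
    (v C₂ : ℝ × ℝ → ℝ)
    (hC₂x : ∀ t, Differentiable ℝ (fun x => C₂ (x, t)))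
    (hC₂t : ∀ x, Differentiable ℝ (fun t => C₂ (x, t)))
    (hneg : ∀ x t, C₂ (x, t) < 0)
    (hpde : ∀ x t,
      deriv (fun τ => C₂ (x, τ)) t + v (x, t) * deriv (fun y => C₂ (y, t)) x
        + 2 * deriv (fun y => v (y, t)) x * C₂ (x, t) = 0) :
    ∀ x t,
      deriv (fun τ => (Real.sqrt (-C₂ (x, τ)))⁻¹) t
        + v (x, t) * deriv (fun y => (Real.sqrt (-C₂ (y, t)))⁻¹) x
        - deriv (fun y => v (y, t)) x * (Real.sqrt (-C₂ (x, t)))⁻¹ = 0 := by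
  intro x t
  rw [((hC₂t x t).hasDerivAt.inv_sqrt_neg (hneg x t)).deriv,
    ((hC₂x t x).hasDerivAt.inv_sqrt_neg (hneg x t)).deriv]
  have hC₂ : C₂ (x, t) ≠ 0 := (hneg x t).ne
  linear_combination (norm := skip) (Real.sqrt (-C₂ (x, t)))⁻¹ / (-2 * C₂ (x, t)) * hpde x t
  field_simp
  ring

/-- If `C₂ < 0` satisfies the transport equation
`∂_t C₂ + v ∂_x C₂ + 2 v_x C₂ = 0`, then the correlation length
`L(x,t) := (−C₂(x,t))^{−1/2}` satisfies `∂_t L + v ∂_x L − v_x L = 0`. -/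
theorem correlation_length_equation
    (v C₂ : ℝ × ℝ → ℝ)
    (hv : ∀ t, Differentiable ℝ (fun x => v (x, t)))
    (hC₂x : ∀ t, Differentiable ℝ (fun x => C₂ (x, t)))
    (hC₂t : ∀ x, Differentiable ℝ (fun t => C₂ (x, t)))
    (hneg : ∀ x t, C₂ (x, t) < 0)
    (hpde : ∀ x t,
      deriv (fun τ => C₂ (x, τ)) t + v (x, t) * deriv (fun y => C₂ (y, t)) x
        + 2 * deriv (fun y => v (y, t)) x * C₂ (x, t) = 0) :
    ∀ x t,
      deriv (fun τ => (Real.sqrt (-C₂ (x, τ)))⁻¹) t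
        + v (x, t) * deriv (fun y => (Real.sqrt (-C₂ (y, t)))⁻¹) x
        - deriv (fun y => v (y, t)) x * (Real.sqrt (-C₂ (x, t)))⁻¹ = 0 :=
  correlation_length_equation_general v C₂ hC₂x hC₂t hneg hpde
end

section
/- Let v : ℝ → ℝ be Lipschitz continuous (time-independent) and let C : ℝ × ℝ × ℝ → ℝ be differentiable and satisfy the correlation equation ∂_t C(x₁,x₂,t) + v(x₁) ∂_{x₁} C(x₁,x₂,t) + v(x₂) ∂_{x₂} C(x₁,x₂,t) = 0 for all (x₁,x₂,t). If C(x₁,x₂,0) ≥ 0 for all x₁, x₂, then C(x₁,x₂,t) ≥ 0 for all x₁, x₂ and all t ≥ 0. -/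
/-!
Along a characteristic `s ↦ (γ₁ s, γ₂ s, s)` with `γᵢ' = v ∘ γᵢ`, the derivative of `C` is exactly
the left-hand side of the correlation equation, so `C` is constant there. Because `v` is globally
Lipschitz, Picard–Lindelöf gives solutions on time intervals whose length depends only on the
Lipschitz constant; gluing them yields a characteristic on all of `[0, t]` through `(x₁, x₂, t)`,
and hence `C (x₁, x₂, t) = C (γ₁ 0, γ₂ 0, 0) ≥ 0`.
-/

open Set
open scoped NNReal

theorem eqOn_piecewise_Iic_Ici {α β : Type*} [LinearOrder α] {f g : α → β} {m : α}
    [DecidablePred (· ∈ Iic m)] (hm : f m = g m) : EqOn (piecewise (Iic m) f g) g (Ici m) := by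
  intro x hx
  rcases (mem_Ici.1 hx).eq_or_lt with rfl | hmx
  · rw [piecewise_eq_of_mem _ _ _ (mem_Iic.2 le_rfl), hm]
  · exact piecewise_eq_of_notMem _ _ _ (notMem_Iic.2 hmx)

section IntegralCurve

variable {E : Type*} [NormedAddCommGroup E] [NormedSpace ℝ E]

theorem IsIntegralCurveOn.piecewise_Iic {γ γ' : ℝ → E} {v : ℝ → E → E} {a m b : ℝ}
    (hγ : IsIntegralCurveOn γ v (Icc a m)) (hγ' : IsIntegralCurveOn γ' v (Icc m b))
    (hm : γ m = γ' m) : IsIntegralCurveOn (piecewise (Iic m) γ γ') v (Icc a b) := by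
  have heq : EqOn (piecewise (Iic m) γ γ') γ (Icc a m) := fun s hs ↦
    piecewise_eq_of_mem _ _ _ hs.2
  have heq' : EqOn (piecewise (Iic m) γ γ') γ' (Icc m b) :=
    (eqOn_piecewise_Iic_Ici hm).mono Icc_subset_Ici_self
  intro t ht
  have hleft : HasDerivWithinAt (piecewise (Iic m) γ γ') (v t (piecewise (Iic m) γ γ' t))
      (Icc a m) t := by
    by_cases htm : t ∈ Icc a m
    · rw [heq htm]; exact (hγ t htm).congr heq (heq htm)
    · exact HasFDerivWithinAt.of_notMem_closure (by rwa [closure_Icc])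
  have hright : HasDerivWithinAt (piecewise (Iic m) γ γ') (v t (piecewise (Iic m) γ γ' t))
      (Icc m b) t := by
    by_cases htm : t ∈ Icc m b
    · rw [heq' htm]; exact (hγ' t htm).congr heq' (heq' htm)
    · exact HasFDerivWithinAt.of_notMem_closure (by rwa [closure_Icc])
  refine (hleft.union hright).mono fun s hs ↦ ?_
  rcases le_total s m with hsm | hms
  exacts [.inl ⟨hs.1, hsm⟩, .inr ⟨hms, hs.2⟩]

variable [CompleteSpace E] {w : E → E} {K : ℝ≥0}

theorem LipschitzWith.exists_isIntegralCurveOn_Icc_of_two_mul_le (hw : LipschitzWith K w)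
    (x₀ : E) {a b t₀ : ℝ} (ht₀ : t₀ ∈ Icc a b) (hK : 2 * K * (b - a) ≤ 1) :
    ∃ γ : ℝ → E, γ t₀ = x₀ ∧ IsIntegralCurveOn γ (fun _ ↦ w) (Icc a b) := by
  have hab : 0 ≤ b - a := by linarith [ht₀.1, ht₀.2]
  -- `R` is chosen so that at speed at most `L` the curve cannot leave the ball before time `b - a`
  let R : ℝ≥0 := ⟨2 * (b - a) * ‖w x₀‖, by positivity⟩
  let L : ℝ≥0 := ‖w x₀‖₊ + K * R
  have hbound : ∀ x ∈ Metric.closedBall x₀ R, ‖w x‖ ≤ L := fun x hx ↦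
    calc ‖w x‖ ≤ ‖w x₀‖ + ‖w x - w x₀‖ := norm_le_norm_add_norm_sub' _ _
      _ ≤ ‖w x₀‖ + K * R := by
        gcongr
        rw [← dist_eq_norm]
        exact (hw.dist_le_mul x x₀).trans (by gcongr; exact hx)
  have hR : (R : ℝ) = 2 * (b - a) * ‖w x₀‖ := rfl
  have hL : (L : ℝ) = ‖w x₀‖ + K * R := by simp [L]
  have htime : (L : ℝ) * max (b - t₀) (t₀ - a) ≤ R - (0 : ℝ≥0) := by
    have hmax : max (b - t₀) (t₀ - a) ≤ b - a :=
      max_le (by linarith [ht₀.1]) (by linarith [ht₀.2])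
    rw [NNReal.coe_zero, sub_zero, hL]
    calc (‖w x₀‖ + K * R) * max (b - t₀) (t₀ - a) ≤ (‖w x₀‖ + K * R) * (b - a) := by gcongr
      _ ≤ R := by rw [hR]; nlinarith [mul_nonneg (norm_nonneg (w x₀)) hab]
  have hpl : IsPicardLindelof (fun _ ↦ w) (⟨t₀, ht₀⟩ : Icc a b) x₀ R 0 L K :=
    .of_time_independent hbound hw.lipschitzOnWith htime
  exact hpl.exists_eq_forall_mem_Icc_hasDerivWithinAt₀

theorem LipschitzWith.exists_isIntegralCurveOn_Icc_sub_add (hw : LipschitzWith K w)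
    {h : ℝ} (h₀ : 0 ≤ h) (hK : 2 * K * h ≤ 1) (x₀ : E) (t₀ : ℝ) (n : ℕ) :
    ∃ γ : ℝ → E, γ t₀ = x₀ ∧
      IsIntegralCurveOn γ (fun _ ↦ w) (Icc (t₀ - n * h) (t₀ + n * h)) := by
  induction n with
  | zero =>
    simpa using hw.exists_isIntegralCurveOn_Icc_of_two_mul_le x₀ (left_mem_Icc.2 le_rfl)
      (by simp : 2 * K * (t₀ - t₀) ≤ 1)
  | succ n ih =>
    obtain ⟨γ, hγt₀, hγ⟩ := ih
    have hnh : 0 ≤ (n : ℝ) * h := by positivity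
    push_cast
    obtain ⟨γₗ, hγₗ, hγₗ'⟩ := hw.exists_isIntegralCurveOn_Icc_of_two_mul_le
      (γ (t₀ - n * h)) (a := t₀ - (n + 1) * h) (b := t₀ - n * h)
      (right_mem_Icc.2 (by linarith)) (by linarith)
    obtain ⟨γᵣ, hγᵣ, hγᵣ'⟩ := hw.exists_isIntegralCurveOn_Icc_of_two_mul_le
      (γ (t₀ + n * h)) (a := t₀ + n * h) (b := t₀ + (n + 1) * h)
      (left_mem_Icc.2 (by linarith)) (by linarith)
    refine ⟨piecewise (Iic (t₀ + n * h)) (piecewise (Iic (t₀ - n * h)) γₗ γ) γᵣ, ?_,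
      (hγₗ'.piecewise_Iic hγ hγₗ).piecewise_Iic hγᵣ' ?_⟩
    · rw [piecewise_eq_of_mem _ _ _ (mem_Iic.2 (by linarith)),
        eqOn_piecewise_Iic_Ici hγₗ (mem_Ici.2 (by linarith)), hγt₀]
    · rw [eqOn_piecewise_Iic_Ici hγₗ (mem_Ici.2 (by linarith)), hγᵣ]

theorem LipschitzWith.exists_isIntegralCurveOn_Icc (hw : LipschitzWith K w) (x₀ : E)
    {a b t₀ : ℝ} (ht₀ : t₀ ∈ Icc a b) :
    ∃ γ : ℝ → E, γ t₀ = x₀ ∧ IsIntegralCurveOn γ (fun _ ↦ w) (Icc a b) := by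
  have hh : 0 < (1 : ℝ) / (2 * K + 1) := by positivity
  obtain ⟨n, hn⟩ := Archimedean.arch (b - a) hh
  rw [nsmul_eq_mul] at hn
  obtain ⟨γ, hγt₀, hγ⟩ := hw.exists_isIntegralCurveOn_Icc_sub_add hh.le
    (by rw [mul_one_div]; exact div_le_one_of_le₀ (by linarith) (by positivity)) x₀ t₀ n
  exact ⟨γ, hγt₀, hγ.mono (Icc_subset_Icc (by linarith [ht₀.2]) (by linarith [ht₀.1]))⟩

end IntegralCurve

theorem fderiv_apply_eq_partial_derivs {F : Type*} [NormedAddCommGroup F] [NormedSpace ℝ F]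
    {C : ℝ × ℝ × ℝ → F} {x₁ x₂ t : ℝ} (hC : DifferentiableAt ℝ C (x₁, x₂, t)) (a b c : ℝ) :
    fderiv ℝ C (x₁, x₂, t) (a, b, c) =
      c • deriv (fun τ ↦ C (x₁, x₂, τ)) t + a • deriv (fun y ↦ C (y, x₂, t)) x₁
        + b • deriv (fun y ↦ C (x₁, y, t)) x₂ := by
  have hτ : deriv (fun τ ↦ C (x₁, x₂, τ)) t = fderiv ℝ C (x₁, x₂, t) (0, 0, 1) :=
    (hC.hasFDerivAt.comp_hasDerivAt t ((hasDerivAt_const t x₁).prodMk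
      ((hasDerivAt_const t x₂).prodMk (hasDerivAt_id t)))).deriv
  have h₁ : deriv (fun y ↦ C (y, x₂, t)) x₁ = fderiv ℝ C (x₁, x₂, t) (1, 0, 0) :=
    (hC.hasFDerivAt.comp_hasDerivAt x₁ ((hasDerivAt_id x₁).prodMk
      ((hasDerivAt_const x₁ x₂).prodMk (hasDerivAt_const x₁ t)))).deriv
  have h₂ : deriv (fun y ↦ C (x₁, y, t)) x₂ = fderiv ℝ C (x₁, x₂, t) (0, 1, 0) :=
    (hC.hasFDerivAt.comp_hasDerivAt x₂ ((hasDerivAt_const x₂ x₁).prodMk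
      ((hasDerivAt_id x₂).prodMk (hasDerivAt_const x₂ t)))).deriv
  have hdecomp : ((a, b, c) : ℝ × ℝ × ℝ) = c • (0, 0, 1) + a • (1, 0, 0) + b • (0, 1, 0) := by
    ext <;> simp
  rw [hdecomp, map_add, map_add, map_smul, map_smul, map_smul, hτ, h₁, h₂]

theorem eq_of_isIntegralCurveOn_of_transport {v : ℝ → ℝ} {C : ℝ × ℝ × ℝ → ℝ}
    (hC : Differentiable ℝ C)
    (hpde : ∀ x₁ x₂ t, deriv (fun τ ↦ C (x₁, x₂, τ)) t + v x₁ * deriv (fun y ↦ C (y, x₂, t)) x₁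
      + v x₂ * deriv (fun y ↦ C (x₁, y, t)) x₂ = 0)
    {γ₁ γ₂ : ℝ → ℝ} {a b : ℝ} (hab : a ≤ b) (hγ₁ : IsIntegralCurveOn γ₁ (fun _ ↦ v) (Icc a b))
    (hγ₂ : IsIntegralCurveOn γ₂ (fun _ ↦ v) (Icc a b)) :
    C (γ₁ b, γ₂ b, b) = C (γ₁ a, γ₂ a, a) := by
  have hderiv : ∀ s ∈ Icc a b,
      HasDerivWithinAt (fun s ↦ C (γ₁ s, γ₂ s, s)) 0 (Icc a b) s := fun s hs ↦ by
    have hchain := (hC _).hasFDerivAt.comp_hasDerivWithinAt s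
      ((hγ₁ s hs).prodMk ((hγ₂ s hs).prodMk (hasDerivWithinAt_id s _)))
    rwa [fderiv_apply_eq_partial_derivs (hC _), one_smul, smul_eq_mul, smul_eq_mul, hpde]
      at hchain
  simpa [sub_eq_zero] using norm_image_sub_le_of_norm_deriv_le_segment' hderiv
    (fun _ _ ↦ norm_zero.le) b (right_mem_Icc.2 hab)

/-- For a Lipschitz, time-independent velocity `v`, solutions of the correlation
equation `∂_t C + v(x₁) ∂_{x₁} C + v(x₂) ∂_{x₂} C = 0` with nonnegative initial
data remain nonnegative for all `t ≥ 0`. -/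
theorem correlation_nonnegativity
    (v : ℝ → ℝ) (hv : ∃ K : NNReal, LipschitzWith K v)
    (C : ℝ × ℝ × ℝ → ℝ) (hC : Differentiable ℝ C)
    (hpde : ∀ x₁ x₂ t,
      deriv (fun τ => C (x₁, x₂, τ)) t
        + v x₁ * deriv (fun y => C (y, x₂, t)) x₁
        + v x₂ * deriv (fun y => C (x₁, y, t)) x₂ = 0)
    (h0 : ∀ x₁ x₂, 0 ≤ C (x₁, x₂, 0)) :
    ∀ x₁ x₂ t, 0 ≤ t → 0 ≤ C (x₁, x₂, t) := by
  intro x₁ x₂ t ht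
  obtain ⟨K, hK⟩ := hv
  obtain ⟨γ₁, hγ₁t, hγ₁⟩ := hK.exists_isIntegralCurveOn_Icc x₁ (right_mem_Icc.2 ht)
  obtain ⟨γ₂, hγ₂t, hγ₂⟩ := hK.exists_isIntegralCurveOn_Icc x₂ (right_mem_Icc.2 ht)
  rw [← hγ₁t, ← hγ₂t, eq_of_isIntegralCurveOn_of_transport hC hpde ht hγ₁ hγ₂]
  exact h0 _ _
end

section
/- Let N be a positive integer, Δx > 0, and v : ZMod N → ℝ. Let q : ℝ → (ZMod N → ℝ) be differentiable and satisfy the semi-discrete centered-difference scheme q_i'(t) = (1/(4Δx)) (v_{i−1} q_{i−1}(t) − v_{i+1} q_{i+1}(t)) + (v_i/(4Δx)) (q_{i−1}(t) − q_{i+1}(t)) for all i ∈ ZMod N and all t. Then the discrete energy t ↦ Σ_{i ∈ ZMod N} q_i(t)² is constant. -/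
/-!
Multiplying the scheme by `2 qᵢ` writes `d(qᵢ²)/dt` as a difference `Fᵢ₋₁ − Fᵢ` of the discrete
energy flux `Fᵢ = (vᵢ + vᵢ₊₁) qᵢ qᵢ₊₁ / (2Δx)`; summed over the periodic grid this telescopes
to zero, so the energy has zero derivative everywhere.
-/

open Finset

theorem Fintype.sum_sub_comp_sub_eq_zero {ι M : Type*} [AddGroup ι] [Fintype ι]
    [AddCommGroup M] (F : ι → M) (a : ι) : ∑ i, (F (i - a) - F i) = 0 := by
  rw [sum_sub_distrib, sub_eq_zero]
  exact (Equiv.subRight a).sum_comp F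

theorem hasDerivAt_sum_sq {ι : Type*} [Fintype ι] {q : ℝ → ι → ℝ} {q' : ι → ℝ} {t : ℝ}
    (hq : ∀ i, HasDerivAt (fun s => q s i) (q' i) t) :
    HasDerivAt (fun s => ∑ i, q s i ^ 2) (∑ i, 2 * q t i * q' i) t := by
  simpa using HasDerivAt.fun_sum (u := univ) fun i _ => (hq i).fun_pow 2

theorem sum_sq_eq_of_sum_mul_deriv_eq_zero {ι : Type*} [Fintype ι] {q q' : ℝ → ι → ℝ}
    (hq : ∀ i t, HasDerivAt (fun s => q s i) (q' t i) t)
    (h : ∀ t, ∑ i, 2 * q t i * q' t i = 0) (t₁ t₂ : ℝ) :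
    ∑ i, q t₁ i ^ 2 = ∑ i, q t₂ i ^ 2 := by
  have hE t : HasDerivAt (fun s => ∑ i, q s i ^ 2) 0 t := h t ▸ hasDerivAt_sum_sq (hq · t)
  exact is_const_of_deriv_eq_zero (fun t => (hE t).differentiableAt) (fun t => (hE t).deriv) t₁ t₂

section CenteredDifference

variable {N : ℕ} (Δx : ℝ) (v q : ZMod N → ℝ)

noncomputable def centeredAdvection (i : ZMod N) : ℝ :=
  (1 / (4 * Δx)) * (v (i - 1) * q (i - 1) - v (i + 1) * q (i + 1))
    + (v i / (4 * Δx)) * (q (i - 1) - q (i + 1))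

noncomputable def energyFlux (i : ZMod N) : ℝ :=
  (v i + v (i + 1)) * q i * q (i + 1) / (2 * Δx)

theorem two_mul_mul_centeredAdvection (i : ZMod N) :
    2 * q i * centeredAdvection Δx v q i = energyFlux Δx v q (i - 1) - energyFlux Δx v q i := by
  simp only [centeredAdvection, energyFlux, sub_add_cancel]
  ring

theorem sum_two_mul_mul_centeredAdvection_eq_zero [NeZero N] :
    ∑ i, 2 * q i * centeredAdvection Δx v q i = 0 := by
  simp only [two_mul_mul_centeredAdvection]
  exact Fintype.sum_sub_comp_sub_eq_zero _ 1

end CenteredDifference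

theorem centered_difference_discrete_energy_conservation_general
    (N : ℕ) [NeZero N] (Δx : ℝ) (v : ZMod N → ℝ)
    (q : ℝ → ZMod N → ℝ)
    (hq : ∀ (i : ZMod N) (t : ℝ),
      HasDerivAt (fun s => q s i)
        ((1 / (4 * Δx)) * (v (i - 1) * q t (i - 1) - v (i + 1) * q t (i + 1))
          + (v i / (4 * Δx)) * (q t (i - 1) - q t (i + 1))) t) :
    ∀ t₁ t₂ : ℝ, ∑ i : ZMod N, q t₁ i ^ 2 = ∑ i : ZMod N, q t₂ i ^ 2 :=
  sum_sq_eq_of_sum_mul_deriv_eq_zero (q' := fun t => centeredAdvection Δx v (q t)) hq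
    fun t => sum_two_mul_mul_centeredAdvection_eq_zero Δx v (q t)

/-- The semi-discrete centered-difference scheme
`q_i' = (1/(4Δx))(v_{i−1} q_{i−1} − v_{i+1} q_{i+1}) + (v_i/(4Δx))(q_{i−1} − q_{i+1})`
on the periodic grid `ZMod N` exactly conserves the discrete energy `Σ_i q_i²`. -/
theorem centered_difference_discrete_energy_conservation
    (N : ℕ) [NeZero N] (Δx : ℝ) (hΔx : 0 < Δx) (v : ZMod N → ℝ)
    (q : ℝ → ZMod N → ℝ)
    (hq : ∀ (i : ZMod N) (t : ℝ),
      HasDerivAt (fun s => q s i)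
        ((1 / (4 * Δx)) * (v (i - 1) * q t (i - 1) - v (i + 1) * q t (i + 1))
          + (v i / (4 * Δx)) * (q t (i - 1) - q t (i + 1))) t) :
    ∀ t₁ t₂ : ℝ, ∑ i : ZMod N, q t₁ i ^ 2 = ∑ i : ZMod N, q t₂ i ^ 2 :=
  centered_difference_discrete_energy_conservation_general N Δx v q hq
end

section
/- Let N be a positive integer, Δx > 0, v, b : ZMod N → ℝ, and let P : ℝ → Matrix (ZMod N) (ZMod N) ℝ be differentiable with P_{ii}(t) > 0 for all i and t, satisfying the upwind covariance semi-discretization d/dt P_{ij} = (v_i/Δx)(P_{i−1,j} − P_{ij}) + (v_j/Δx)(P_{i,j−1} − P_{ij}) − (b_i + b_j) P_{ij} for all i, j, t. Define C_{ij}(t) := P_{ij}(t) / √(P_{ii}(t) P_{jj}(t)). Then for all i, j, t: d/dt C_{ij} = (v_i/Δx) √(P_{i−1,i−1}/P_{ii}) [C_{i−1,j} − (1/2) C_{ij} (C_{i−1,i} + C_{i,i−1})] + (v_j/Δx) √(P_{j−1,j−1}/P_{jj}) [C_{i,j−1} − (1/2) C_{ij} (C_{j−1,j} + C_{j,j−1})].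 -/
/-!
Since `C_ij = P_ij (P_ii P_jj)^(-1/2)`, the derivative of `C_ij` is `Ṗ_ij / √(P_ii P_jj)` minus
`C_ij / 2` times the logarithmic derivatives of `P_ii` and `P_jj`. Dividing the upwind right-hand
side by `√(P_ii P_jj)` and using `P_{i-1,j} / √(P_ii P_jj) = √(P_{i-1,i-1} / P_ii) C_{i-1,j}`
expresses everything through `C`; the diagonal case `j = i` (where `C_ii = 1`) gives the
logarithmic derivatives, and the damping terms `b` and the self-terms `-(v_i/Δx) C_ij` cancel.
-/

/-- The correlation matrix entry associated with a covariance matrix `P`: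
`C_{ij} = P_{ij} / √(P_{ii} P_{jj})`. -/
noncomputable def corrEntry {N : ℕ} (P : Matrix (ZMod N) (ZMod N) ℝ)
    (i j : ZMod N) : ℝ :=
  P i j / Real.sqrt (P i i * P j j)

theorem hasDerivAt_corrEntry {N : ℕ} {P : ℝ → Matrix (ZMod N) (ZMod N) ℝ} {i j : ZMod N}
    {t dij dii djj : ℝ} (hij : HasDerivAt (fun s => P s i j) dij t)
    (hii : HasDerivAt (fun s => P s i i) dii t) (hjj : HasDerivAt (fun s => P s j j) djj t)
    (hi : 0 < P t i i) (hj : 0 < P t j j) :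
    HasDerivAt (fun s => corrEntry (P s) i j)
      (dij / √(P t i i * P t j j)
        - corrEntry (P t) i j * (dii / P t i i + djj / P t j j) / 2) t := by
  have hprod : 0 < P t i i * P t j j := mul_pos hi hj
  have hsqrt : √(P t i i * P t j j) ≠ 0 := (Real.sqrt_pos.2 hprod).ne'
  refine (hij.div ((hii.mul hjj).sqrt hprod.ne') hsqrt).congr_deriv ?_
  have hsq : √(P t i i * P t j j) ^ 2 = P t i i * P t j j := Real.sq_sqrt hprod.le
  simp only [Pi.mul_apply, corrEntry]
  field_simp
  rw [hsq]
  ring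

theorem sqrt_div_mul_corrEntry_left {N : ℕ} (P : Matrix (ZMod N) (ZMod N) ℝ) {i j k : ZMod N}
    (hk : 0 < P k k) (hi : 0 ≤ P i i) :
    √(P k k / P i i) * corrEntry P k j = P k j / √(P i i * P j j) := by
  have : √(P k k) ≠ 0 := (Real.sqrt_pos.2 hk).ne'
  rw [corrEntry, Real.sqrt_div hk.le, Real.sqrt_mul hk.le, Real.sqrt_mul hi]
  field_simp

theorem sqrt_div_mul_corrEntry_right {N : ℕ} (P : Matrix (ZMod N) (ZMod N) ℝ) {i j k : ZMod N}
    (hk : 0 < P k k) (hj : 0 ≤ P j j) :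
    √(P k k / P j j) * corrEntry P i k = P i k / √(P i i * P j j) := by
  have : √(P k k) ≠ 0 := (Real.sqrt_pos.2 hk).ne'
  rw [corrEntry, Real.sqrt_div hk.le, Real.sqrt_mul' _ hk.le, Real.sqrt_mul' _ hj]
  field_simp

def upwindRate {N : ℕ} (a b : ZMod N → ℝ) (P : Matrix (ZMod N) (ZMod N) ℝ) (i j : ZMod N) : ℝ :=
  a i * (P (i - 1) j - P i j) + a j * (P i (j - 1) - P i j) - (b i + b j) * P i j

theorem upwindRate_div_sqrt {N : ℕ} (a b : ZMod N → ℝ) (P : Matrix (ZMod N) (ZMod N) ℝ)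
    {i j : ZMod N} (hi : 0 < P i i) (hj : 0 < P j j)
    (hi_prev : 0 < P (i - 1) (i - 1)) (hj_prev : 0 < P (j - 1) (j - 1)) :
    upwindRate a b P i j / √(P i i * P j j)
      = a i * (√(P (i - 1) (i - 1) / P i i) * corrEntry P (i - 1) j - corrEntry P i j)
        + a j * (√(P (j - 1) (j - 1) / P j j) * corrEntry P i (j - 1) - corrEntry P i j)
        - (b i + b j) * corrEntry P i j := by
  rw [sqrt_div_mul_corrEntry_left P hi_prev hi.le, sqrt_div_mul_corrEntry_right P hj_prev hj.le]
  simp only [upwindRate, corrEntry]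
  ring

theorem upwindRate_diag_div {N : ℕ} (a b : ZMod N → ℝ) (P : Matrix (ZMod N) (ZMod N) ℝ)
    {i : ZMod N} (hi : 0 < P i i) (hi_prev : 0 < P (i - 1) (i - 1)) :
    upwindRate a b P i i / P i i
      = a i * √(P (i - 1) (i - 1) / P i i) * (corrEntry P (i - 1) i + corrEntry P i (i - 1))
        - 2 * (a i + b i) := by
  have hdiag : corrEntry P i i = 1 := by
    rw [corrEntry, Real.sqrt_mul_self hi.le, div_self hi.ne']
  have hrow := upwindRate_div_sqrt a b P hi hi hi_prev hi_prev
  rw [Real.sqrt_mul_self hi.le, hdiag] at hrow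
  rw [hrow]
  ring

theorem upwind_correlation_semidiscretization_general
    (N : ℕ) (Δx : ℝ) (v b : ZMod N → ℝ)
    (P : ℝ → Matrix (ZMod N) (ZMod N) ℝ)
    (hpos : ∀ (i : ZMod N) (t : ℝ), 0 < P t i i)
    (hP : ∀ (i j : ZMod N) (t : ℝ),
      HasDerivAt (fun s => P s i j)
        (v i / Δx * (P t (i - 1) j - P t i j)
          + v j / Δx * (P t i (j - 1) - P t i j)
          - (b i + b j) * P t i j) t) :
    ∀ (i j : ZMod N) (t : ℝ),
      HasDerivAt (fun s => corrEntry (P s) i j)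
        (v i / Δx * Real.sqrt (P t (i - 1) (i - 1) / P t i i)
            * (corrEntry (P t) (i - 1) j
              - 1 / 2 * corrEntry (P t) i j
                * (corrEntry (P t) (i - 1) i + corrEntry (P t) i (i - 1)))
          + v j / Δx * Real.sqrt (P t (j - 1) (j - 1) / P t j j)
            * (corrEntry (P t) i (j - 1)
              - 1 / 2 * corrEntry (P t) i j
                * (corrEntry (P t) (j - 1) j + corrEntry (P t) j (j - 1)))) t := by
  intro i j t
  set a : ZMod N → ℝ := fun k => v k / Δx
  have hrate : ∀ k l, HasDerivAt (fun s => P s k l) (upwindRate a b (P t) k l) t :=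
    fun k l => hP k l t
  refine (hasDerivAt_corrEntry (hrate i j) (hrate i i) (hrate j j) (hpos i t)
    (hpos j t)).congr_deriv ?_
  rw [upwindRate_div_sqrt a b (P t) (hpos i t) (hpos j t) (hpos _ t) (hpos _ t),
    upwindRate_diag_div a b (P t) (hpos i t) (hpos _ t),
    upwindRate_diag_div a b (P t) (hpos j t) (hpos _ t)]
  ring

/-- The semi-discretization for the correlation implied by the first-order upwind
covariance semi-discretization. -/
theorem upwind_correlation_semidiscretization
    (N : ℕ) (hN : 0 < N) (Δx : ℝ) (hΔx : 0 < Δx) (v b : ZMod N → ℝ)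
    (P : ℝ → Matrix (ZMod N) (ZMod N) ℝ)
    (hpos : ∀ (i : ZMod N) (t : ℝ), 0 < P t i i)
    (hP : ∀ (i j : ZMod N) (t : ℝ),
      HasDerivAt (fun s => P s i j)
        (v i / Δx * (P t (i - 1) j - P t i j)
          + v j / Δx * (P t i (j - 1) - P t i j)
          - (b i + b j) * P t i j) t) :
    ∀ (i j : ZMod N) (t : ℝ),
      HasDerivAt (fun s => corrEntry (P s) i j)
        (v i / Δx * Real.sqrt (P t (i - 1) (i - 1) / P t i i)
            * (corrEntry (P t) (i - 1) j
              - 1 / 2 * corrEntry (P t) i j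
                * (corrEntry (P t) (i - 1) i + corrEntry (P t) i (i - 1)))
          + v j / Δx * Real.sqrt (P t (j - 1) (j - 1) / P t j j)
            * (corrEntry (P t) i (j - 1)
              - 1 / 2 * corrEntry (P t) i j
                * (corrEntry (P t) (j - 1) j + corrEntry (P t) j (j - 1)))) t :=
  upwind_correlation_semidiscretization_general N Δx v b P hpos hP
end

section
/- Let N be a positive integer, let w : ℝ → (ZMod N → ℝ) be continuous, and let C : ℝ → Matrix (ZMod N) (ZMod N) ℝ be differentiable and satisfy the upwind correlation semi-discretization d/dt C_{ij} = w_i(t) [C_{i−1,j} − (1/2) C_{ij} (C_{i−1,i} + C_{i,i−1})] + w_j(t) [C_{i,j−1} − (1/2) C_{ij} (C_{j−1,j} + C_{j,j−1})] for all i, j, t. If C_{ii}(t₀) = 1 for all i at some time t₀, then C_{ii}(t) = 1 for all i and all t. -/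
/-!
On the diagonal the two bracketed terms coincide, so `g = C_ii - 1` solves the scalar linear
equation `g' = b g` with the continuous coefficient `b = -w_i (C_{i-1,i} + C_{i,i-1})`.
Its solutions are `g t₀ · exp (∫_{t₀}^t b)`, so `g` vanishes identically once it vanishes at `t₀`.
-/

open Real

theorem eq_mul_exp_integral_of_hasDerivAt_mul {b g : ℝ → ℝ} (hb : Continuous b)
    (hg : ∀ t, HasDerivAt g (b t * g t) t) (t₀ t : ℝ) :
    g t = g t₀ * exp (∫ s in t₀..t, b s) := by
  set B : ℝ → ℝ := fun t => ∫ s in t₀..t, b s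
  have hB : ∀ t, HasDerivAt B (b t) t := fun t =>
    intervalIntegral.integral_hasDerivAt_right (hb.intervalIntegrable _ _)
      (hb.stronglyMeasurableAtFilter _ _) hb.continuousAt
  have hconst : ∀ t, HasDerivAt (fun s => g s * exp (-B s)) 0 t := fun t =>
    ((hg t).fun_mul (hB t).neg.exp).congr_deriv (by ring)
  have key := is_const_of_deriv_eq_zero (fun t => (hconst t).differentiableAt)
    (fun t => (hconst t).deriv) t t₀
  simp only [B, intervalIntegral.integral_same, neg_zero, exp_zero, mul_one] at key
  rw [← key, mul_assoc, ← exp_add, neg_add_cancel, exp_zero, mul_one]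

theorem upwind_correlation_unit_diagonal_general
    (N : ℕ) (w : ℝ → ZMod N → ℝ) (hw : Continuous w)
    (C : ℝ → Matrix (ZMod N) (ZMod N) ℝ)
    (hC : ∀ (i j : ZMod N) (t : ℝ),
      HasDerivAt (fun s => C s i j)
        (w t i * (C t (i - 1) j
            - 1 / 2 * C t i j * (C t (i - 1) i + C t i (i - 1)))
          + w t j * (C t i (j - 1)
            - 1 / 2 * C t i j * (C t (j - 1) j + C t j (j - 1)))) t)
    (t₀ : ℝ) (h₀ : ∀ i : ZMod N, C t₀ i i = 1) :
    ∀ (i : ZMod N) (t : ℝ), C t i i = 1 := by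
  intro i t
  set b : ℝ → ℝ := fun s => -(w s i * (C s (i - 1) i + C s i (i - 1)))
  have hdiag : ∀ s, HasDerivAt (fun s => C s i i - 1) (b s * (C s i i - 1)) s := fun s =>
    ((hC i i s).sub_const 1).congr_deriv (by ring)
  have hentry : ∀ j k, Continuous fun s => C s j k := fun j k =>
    continuous_iff_continuousAt.2 fun s => (hC j k s).continuousAt
  have hb : Continuous b := by fun_prop
  have hsol := eq_mul_exp_integral_of_hasDerivAt_mul hb hdiag t₀ t
  rwa [h₀ i, sub_self, zero_mul, sub_eq_zero] at hsol

/-- For the upwind correlation semi-discretization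
`d/dt C_{ij} = w_i [C_{i−1,j} − ½ C_{ij}(C_{i−1,i}+C_{i,i−1})]
             + w_j [C_{i,j−1} − ½ C_{ij}(C_{j−1,j}+C_{j,j−1})]`,
a unit diagonal `C_{ii} = 1` at some time `t₀` is preserved for all time. -/
theorem upwind_correlation_unit_diagonal
    (N : ℕ) [NeZero N] (w : ℝ → ZMod N → ℝ) (hw : Continuous w)
    (C : ℝ → Matrix (ZMod N) (ZMod N) ℝ)
    (hC : ∀ (i j : ZMod N) (t : ℝ),
      HasDerivAt (fun s => C s i j)
        (w t i * (C t (i - 1) j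
            - 1 / 2 * C t i j * (C t (i - 1) i + C t i (i - 1)))
          + w t j * (C t i (j - 1)
            - 1 / 2 * C t i j * (C t (j - 1) j + C t j (j - 1)))) t)
    (t₀ : ℝ) (h₀ : ∀ i : ZMod N, C t₀ i i = 1) :
    ∀ (i : ZMod N) (t : ℝ), C t i i = 1 :=
  upwind_correlation_unit_diagonal_general N w hw C hC t₀ h₀
end

section
/- Let N be a positive integer, Δx > 0, v : ZMod N → ℝ, and let P : ℝ → Matrix (ZMod N) (ZMod N) ℝ be differentiable with P_{ii}(t) > 0 for all i and t, satisfying the centered-difference covariance semi-discretization d/dt P_{ij} = (1/(4Δx))(v_{i−1} P_{i−1,j} − v_{i+1} P_{i+1,j}) + (v_i/(4Δx))(P_{i−1,j} − P_{i+1,j}) + (1/(4Δx))(v_{j−1} P_{i,j−1} − v_{j+1} P_{i,j+1}) + (v_j/(4Δx))(P_{i,j−1} − P_{i,j+1}) for all i, j, t. Define C_{ij}(t) := P_{ij}(t) / √(P_{ii}(t) P_{jj}(t)). Then for all i, j, t: d/dt C_{ij} = (1/(2Δx)) √(P_{i−1,i−1}/P_{ii}) ((v_{i−1}+v_i)/2)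 [C_{i−1,j} − (1/2) C_{ij}(C_{i−1,i}+C_{i,i−1})] − (1/(2Δx)) √(P_{i+1,i+1}/P_{ii}) ((v_{i+1}+v_i)/2) [C_{i+1,j} − (1/2) C_{ij}(C_{i+1,i}+C_{i,i+1})] + (1/(2Δx)) √(P_{j−1,j−1}/P_{jj}) ((v_{j−1}+v_j)/2) [C_{i,j−1} − (1/2) C_{ij}(C_{j−1,j}+C_{j,j−1})] − (1/(2Δx)) √(P_{j+1,j+1}/P_{jj}) ((v_{j+1}+v_j)/2) [C_{i,j+1} − (1/2) C_{ij}(C_{j+1,j}+C_{j,j+1})]. -/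
theorem HasDerivAt.div_sqrt_mul {p a b : ℝ → ℝ} {p' a' b' t : ℝ}
    (hp : HasDerivAt p p' t) (ha : HasDerivAt a a' t) (hb : HasDerivAt b b' t)
    (ha₀ : 0 < a t) (hb₀ : 0 < b t) :
    HasDerivAt (fun s => p s / √(a s * b s))
      (p' / √(a t * b t) - p t / √(a t * b t) / 2 * (a' / a t + b' / b t)) t := by
  have hab := mul_pos ha₀ hb₀
  refine (hp.div ((ha.mul hb).sqrt hab.ne') (Real.sqrt_pos.mpr hab).ne').congr_deriv ?_
  have hsq := Real.sq_sqrt hab.le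
  simp only [Pi.mul_apply]
  field_simp
  rw [hsq]
  ring

namespace corrEntry

variable {N : ℕ} {P : Matrix (ZMod N) (ZMod N) ℝ} {i j k : ZMod N}

theorem eq_div_sqrt_mul_sqrt (hi : 0 ≤ P i i) :
    corrEntry P i j = P i j / (√(P i i) * √(P j j)) := by
  rw [corrEntry, Real.sqrt_mul hi]

theorem row_coupling (hi : 0 < P i i) (hj : 0 < P j j) (hk : 0 < P k k) :
    P k j / √(P i i * P j j) - corrEntry P i j / 2 * ((P k i + P i k) / P i i)
      = √(P k k / P i i)
        * (corrEntry P k j - 1 / 2 * corrEntry P i j * (corrEntry P k i + corrEntry P i k)) := by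
  simp only [eq_div_sqrt_mul_sqrt hi.le, eq_div_sqrt_mul_sqrt hk.le, Real.sqrt_mul hi.le,
    Real.sqrt_div hk.le]
  have := Real.sqrt_pos.mpr hi
  have := Real.sqrt_pos.mpr hj
  have := Real.sqrt_pos.mpr hk
  field_simp
  rw [Real.sq_sqrt hi.le]
  ring

theorem col_coupling (hi : 0 < P i i) (hj : 0 < P j j) (hk : 0 < P k k) :
    P i k / √(P i i * P j j) - corrEntry P i j / 2 * ((P k j + P j k) / P j j)
      = √(P k k / P j j)
        * (corrEntry P i k - 1 / 2 * corrEntry P i j * (corrEntry P k j + corrEntry P j k)) := by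
  simp only [eq_div_sqrt_mul_sqrt hi.le, eq_div_sqrt_mul_sqrt hj.le, eq_div_sqrt_mul_sqrt hk.le,
    Real.sqrt_mul hi.le, Real.sqrt_div hk.le]
  have := Real.sqrt_pos.mpr hi
  have := Real.sqrt_pos.mpr hj
  have := Real.sqrt_pos.mpr hk
  field_simp
  rw [Real.sq_sqrt hj.le]
  ring

end corrEntry

section Tendencies

variable {N : ℕ} (Δx : ℝ) (v : ZMod N → ℝ) (P : Matrix (ZMod N) (ZMod N) ℝ)

noncomputable def covarianceRHS (i j : ZMod N) : ℝ :=
  1 / (4 * Δx) * (v (i - 1) * P (i - 1) j - v (i + 1) * P (i + 1) j)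
    + v i / (4 * Δx) * (P (i - 1) j - P (i + 1) j)
    + 1 / (4 * Δx) * (v (j - 1) * P i (j - 1) - v (j + 1) * P i (j + 1))
    + v j / (4 * Δx) * (P i (j - 1) - P i (j + 1))

noncomputable def correlationRHS (i j : ZMod N) : ℝ :=
  1 / (2 * Δx) * √(P (i - 1) (i - 1) / P i i)
      * ((v (i - 1) + v i) / 2)
      * (corrEntry P (i - 1) j
        - 1 / 2 * corrEntry P i j
          * (corrEntry P (i - 1) i + corrEntry P i (i - 1)))
    - 1 / (2 * Δx) * √(P (i + 1) (i + 1) / P i i)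
      * ((v (i + 1) + v i) / 2)
      * (corrEntry P (i + 1) j
        - 1 / 2 * corrEntry P i j
          * (corrEntry P (i + 1) i + corrEntry P i (i + 1)))
    + 1 / (2 * Δx) * √(P (j - 1) (j - 1) / P j j)
      * ((v (j - 1) + v j) / 2)
      * (corrEntry P i (j - 1)
        - 1 / 2 * corrEntry P i j
          * (corrEntry P (j - 1) j + corrEntry P j (j - 1)))
    - 1 / (2 * Δx) * √(P (j + 1) (j + 1) / P j j)
      * ((v (j + 1) + v j) / 2)
      * (corrEntry P i (j + 1)
        - 1 / 2 * corrEntry P i j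
          * (corrEntry P (j + 1) j + corrEntry P j (j + 1)))

theorem covarianceRHS_div_sub_eq_correlationRHS {P} (hpos : ∀ k, 0 < P k k) (i j : ZMod N) :
    covarianceRHS Δx v P i j / √(P i i * P j j)
        - corrEntry P i j / 2
          * (covarianceRHS Δx v P i i / P i i + covarianceRHS Δx v P j j / P j j)
      = correlationRHS Δx v P i j := by
  have row k := corrEntry.row_coupling (hpos i) (hpos j) (hpos k)
  have col k := corrEntry.col_coupling (hpos i) (hpos j) (hpos k)
  unfold covarianceRHS correlationRHS
  linear_combination (v (i - 1) + v i) / (4 * Δx) * row (i - 1)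
    - (v (i + 1) + v i) / (4 * Δx) * row (i + 1)
    + (v (j - 1) + v j) / (4 * Δx) * col (j - 1)
    - (v (j + 1) + v j) / (4 * Δx) * col (j + 1)

end Tendencies

theorem centered_difference_correlation_semidiscretization_general
    (N : ℕ) (Δx : ℝ) (v : ZMod N → ℝ)
    (P : ℝ → Matrix (ZMod N) (ZMod N) ℝ)
    (hpos : ∀ (i : ZMod N) (t : ℝ), 0 < P t i i)
    (hP : ∀ (i j : ZMod N) (t : ℝ),
      HasDerivAt (fun s => P s i j)
        (1 / (4 * Δx) * (v (i - 1) * P t (i - 1) j - v (i + 1) * P t (i + 1) j)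
          + v i / (4 * Δx) * (P t (i - 1) j - P t (i + 1) j)
          + 1 / (4 * Δx) * (v (j - 1) * P t i (j - 1) - v (j + 1) * P t i (j + 1))
          + v j / (4 * Δx) * (P t i (j - 1) - P t i (j + 1))) t) :
    ∀ (i j : ZMod N) (t : ℝ),
      HasDerivAt (fun s => corrEntry (P s) i j)
        (1 / (2 * Δx) * Real.sqrt (P t (i - 1) (i - 1) / P t i i)
            * ((v (i - 1) + v i) / 2)
            * (corrEntry (P t) (i - 1) j
              - 1 / 2 * corrEntry (P t) i j
                * (corrEntry (P t) (i - 1) i + corrEntry (P t) i (i - 1)))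
          - 1 / (2 * Δx) * Real.sqrt (P t (i + 1) (i + 1) / P t i i)
            * ((v (i + 1) + v i) / 2)
            * (corrEntry (P t) (i + 1) j
              - 1 / 2 * corrEntry (P t) i j
                * (corrEntry (P t) (i + 1) i + corrEntry (P t) i (i + 1)))
          + 1 / (2 * Δx) * Real.sqrt (P t (j - 1) (j - 1) / P t j j)
            * ((v (j - 1) + v j) / 2)
            * (corrEntry (P t) i (j - 1)
              - 1 / 2 * corrEntry (P t) i j
                * (corrEntry (P t) (j - 1) j + corrEntry (P t) j (j - 1)))
          - 1 / (2 * Δx) * Real.sqrt (P t (j + 1) (j + 1) / P t j j)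
            * ((v (j + 1) + v j) / 2)
            * (corrEntry (P t) i (j + 1)
              - 1 / 2 * corrEntry (P t) i j
                * (corrEntry (P t) (j + 1) j + corrEntry (P t) j (j + 1)))) t := by
  intro i j t
  exact (HasDerivAt.div_sqrt_mul (hP i j t) (hP i i t) (hP j j t) (hpos i t)
    (hpos j t)).congr_deriv (covarianceRHS_div_sub_eq_correlationRHS Δx v (fun k => hpos k t) i j)

/-- The semi-discretization for the correlation implied by the second-order
centered-difference covariance semi-discretization. -/
theorem centered_difference_correlation_semidiscretization
    (N : ℕ) (hN : 0 < N) (Δx : ℝ) (hΔx : 0 < Δx) (v : ZMod N → ℝ)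
    (P : ℝ → Matrix (ZMod N) (ZMod N) ℝ)
    (hpos : ∀ (i : ZMod N) (t : ℝ), 0 < P t i i)
    (hP : ∀ (i j : ZMod N) (t : ℝ),
      HasDerivAt (fun s => P s i j)
        (1 / (4 * Δx) * (v (i - 1) * P t (i - 1) j - v (i + 1) * P t (i + 1) j)
          + v i / (4 * Δx) * (P t (i - 1) j - P t (i + 1) j)
          + 1 / (4 * Δx) * (v (j - 1) * P t i (j - 1) - v (j + 1) * P t i (j + 1))
          + v j / (4 * Δx) * (P t i (j - 1) - P t i (j + 1))) t) :
    ∀ (i j : ZMod N) (t : ℝ),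
      HasDerivAt (fun s => corrEntry (P s) i j)
        (1 / (2 * Δx) * Real.sqrt (P t (i - 1) (i - 1) / P t i i)
            * ((v (i - 1) + v i) / 2)
            * (corrEntry (P t) (i - 1) j
              - 1 / 2 * corrEntry (P t) i j
                * (corrEntry (P t) (i - 1) i + corrEntry (P t) i (i - 1)))
          - 1 / (2 * Δx) * Real.sqrt (P t (i + 1) (i + 1) / P t i i)
            * ((v (i + 1) + v i) / 2)
            * (corrEntry (P t) (i + 1) j
              - 1 / 2 * corrEntry (P t) i j
                * (corrEntry (P t) (i + 1) i + corrEntry (P t) i (i + 1)))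
          + 1 / (2 * Δx) * Real.sqrt (P t (j - 1) (j - 1) / P t j j)
            * ((v (j - 1) + v j) / 2)
            * (corrEntry (P t) i (j - 1)
              - 1 / 2 * corrEntry (P t) i j
                * (corrEntry (P t) (j - 1) j + corrEntry (P t) j (j - 1)))
          - 1 / (2 * Δx) * Real.sqrt (P t (j + 1) (j + 1) / P t j j)
            * ((v (j + 1) + v j) / 2)
            * (corrEntry (P t) i (j + 1)
              - 1 / 2 * corrEntry (P t) i j
                * (corrEntry (P t) (j + 1) j + corrEntry (P t) j (j + 1)))) t :=
  centered_difference_correlation_semidiscretization_general N Δx v P hpos hP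
end
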